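/- arXiv:2401.17184 — 5 statements merged into one kernel-verified Lean document; each statement's English description precedes it below -/
import Mathlib

section
/- Let Δ > 0. Then for all real i ≤ 0 and all real r with 0 ≤ r < Δ, the first-order Taylor remainder of Φ⁺ satisfies 0 ≤ E⁺(i, r) ≤ E⁺(0, Δ); in particular |Φ⁺(i − r) − (Φ⁺(i) − r·(Φ⁺)'(i))| ≤ Φ⁺(−Δ) − Φ⁺(0) + Δ·(Φ⁺)'(0). -/
/-!
Φ⁺ is convex, so its tangent lines lie below its graph: this is `0 ≤ E⁺(i, r)`, and, since
(Φ⁺)' is increasing, it also makes `r ↦ E⁺(i, r)` increasing on `r ≥ 0`. The `i`-derivative of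
`E⁺(i, r)` is `(Φ⁺)'(i - r) - (Φ⁺)'(i) + r (Φ⁺)''(i)`, nonnegative for `i ≤ 0` because (Φ⁺)' is
convex on `(-∞, 0]`. Hence `E⁺(i, r) ≤ E⁺(0, r) ≤ E⁺(0, Δ)`.
-/

/-- Φ⁺(x) = log₂(1 + 2^x) -/
noncomputable def Phip (x : ℝ) : ℝ := Real.logb 2 (1 + (2:ℝ) ^ x)

/-- (Φ⁺)'(x) = 2^x / (2^x + 1) -/
noncomputable def dPhip (x : ℝ) : ℝ := (2:ℝ) ^ x / ((2:ℝ) ^ x + 1)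

/-- First-order Taylor remainder E⁺(i, r) = Φ⁺(i − r) − Φ⁺(i) + r·(Φ⁺)'(i) -/
noncomputable def Ep (i r : ℝ) : ℝ := Phip (i - r) - Phip i + r * dPhip i

open Set

noncomputable def firstOrderRemainder (f f' : ℝ → ℝ) (i r : ℝ) : ℝ := f (i - r) - f i + r * f' i

section Convex

variable {S : Set ℝ} {f f' f'' : ℝ → ℝ}

theorem ConvexOn.add_mul_le_of_hasDerivAt (hf : ConvexOn ℝ S f) {x y d : ℝ} (hx : x ∈ S)
    (hy : y ∈ S) (hd : HasDerivAt f d x) : f x + (y - x) * d ≤ f y := by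
  rcases lt_trichotomy x y with hxy | rfl | hxy
  · have := hf.le_slope_of_hasDerivAt hx hy hxy hd
    rw [slope_def_field, le_div_iff₀ (sub_pos.2 hxy)] at this
    linarith
  · simp
  · have := hf.slope_le_of_hasDerivAt hy hx hxy hd
    rw [slope_def_field, div_le_iff₀ (sub_pos.2 hxy)] at this
    linarith

theorem MonotoneOn.convexOn_of_hasDerivAt (hS : Convex ℝ S)
    (hd : ∀ x ∈ S, HasDerivAt f (f' x) x) (hmono : MonotoneOn f' S) : ConvexOn ℝ S f := by
  have hderiv : EqOn (deriv f) f' (interior S) := fun x hx => (hd x (interior_subset hx)).deriv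
  refine MonotoneOn.convexOn_of_deriv hS
    (fun x hx => (hd x hx).continuousAt.continuousWithinAt)
    (fun x hx => (hd x (interior_subset hx)).differentiableAt.differentiableWithinAt) ?_
  exact (hmono.mono interior_subset).congr hderiv.symm

theorem ConvexOn.monotoneOn_of_hasDerivAt (hf : ConvexOn ℝ S f)
    (hd : ∀ x ∈ S, HasDerivAt f (f' x) x) : MonotoneOn f' S :=
  (hf.monotoneOn_deriv fun x hx => (hd x hx).differentiableAt).congr
    fun x hx => (hd x hx).deriv

theorem ConvexOn.firstOrderRemainder_nonneg (hf : ConvexOn ℝ S f) {i r : ℝ} (hi : i ∈ S)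
    (hir : i - r ∈ S) (hd : HasDerivAt f (f' i) i) : 0 ≤ firstOrderRemainder f f' i r := by
  have := hf.add_mul_le_of_hasDerivAt hi hir hd
  unfold firstOrderRemainder
  linarith

theorem ConvexOn.firstOrderRemainder_le_of_le (hf : ConvexOn ℝ S f)
    (hd : ∀ x ∈ S, HasDerivAt f (f' x) x) {i r s : ℝ} (hi : i ∈ S) (his : i - s ∈ S)
    (hr : 0 ≤ r) (hrs : r ≤ s) : firstOrderRemainder f f' i r ≤ firstOrderRemainder f f' i s := by
  have hir : i - r ∈ S := hf.1.ordConnected.out his hi ⟨by linarith, by linarith⟩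
  have htangent := hf.add_mul_le_of_hasDerivAt hir his (hd _ hir)
  have hmono : f' (i - r) ≤ f' i := hf.monotoneOn_of_hasDerivAt hd hir hi (by linarith)
  unfold firstOrderRemainder
  nlinarith

theorem ConvexOn.monotoneOn_firstOrderRemainder {a r : ℝ} (hf'c : ConvexOn ℝ (Iic a) f')
    (hd : ∀ x ≤ a, HasDerivAt f (f' x) x) (hd' : ∀ x ≤ a, HasDerivAt f' (f'' x) x)
    (hr : 0 ≤ r) : MonotoneOn (firstOrderRemainder f f' · r) (Iic a) := by
  have hderiv : ∀ t ≤ a, HasDerivAt (firstOrderRemainder f f' · r)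
      (f' (t - r) - f' t + r * f'' t) t := fun t ht =>
    (((hd (t - r) (by linarith)).comp_sub_const t r).sub (hd t ht)).add
      ((hd' t ht).const_mul r)
  refine monotoneOn_of_hasDerivWithinAt_nonneg (convex_Iic a)
    (fun t ht => (hderiv t ht).continuousAt.continuousWithinAt)
    (fun t ht => (hderiv t (interior_subset (s := Iic a) ht)).hasDerivWithinAt) fun t ht => ?_
  have hta : t ≤ a := interior_subset (s := Iic a) ht
  have := hf'c.add_mul_le_of_hasDerivAt (y := t - r) hta
    (show t - r ≤ a by linarith) (hd' t hta)
  linarith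

end Convex

noncomputable def ddPhip (x : ℝ) : ℝ := (2:ℝ) ^ x * Real.log 2 / ((2:ℝ) ^ x + 1) ^ 2

lemma hasDerivAt_two_rpow (x : ℝ) :
    HasDerivAt (fun y : ℝ => (2:ℝ) ^ y) ((2:ℝ) ^ x * Real.log 2) x :=
  (Real.hasStrictDerivAt_const_rpow two_pos x).hasDerivAt

lemma hasDerivAt_Phip (x : ℝ) : HasDerivAt Phip (dPhip x) x := by
  have hlog := Real.log_pos one_lt_two
  have h : HasDerivAt Phip _ x :=
    (((hasDerivAt_two_rpow x).const_add 1).log (by positivity)).div_const (Real.log 2)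
  refine h.congr_deriv ?_
  unfold dPhip
  field_simp
  ring

lemma hasDerivAt_dPhip (x : ℝ) : HasDerivAt dPhip (ddPhip x) x := by
  refine ((hasDerivAt_two_rpow x).div ((hasDerivAt_two_rpow x).add_const 1)
    (by positivity)).congr_deriv ?_
  unfold ddPhip
  ring

lemma monotone_dPhip : Monotone dPhip :=
  monotone_of_hasDerivAt_nonneg hasDerivAt_dPhip fun x => by
    have := Real.log_pos one_lt_two
    unfold ddPhip
    positivity

lemma monotoneOn_ddPhip : MonotoneOn ddPhip (Iic 0) := by
  intro a _ b hb hab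
  have hu : (2:ℝ) ^ a ≤ (2:ℝ) ^ b := Real.rpow_le_rpow_of_exponent_le one_le_two hab
  have hv : (2:ℝ) ^ b ≤ 1 := Real.rpow_le_one_of_one_le_of_nonpos one_le_two hb
  have hu0 : 0 < (2:ℝ) ^ a := by positivity
  have hlog := Real.log_pos one_lt_two
  unfold ddPhip
  rw [div_le_div_iff₀ (by positivity) (by positivity)]
  -- `v (u + 1)² - u (v + 1)² = (v - u) (1 - u v)` for `u = 2 ^ a ≤ v = 2 ^ b ≤ 1`
  have key : (2:ℝ) ^ a * ((2:ℝ) ^ b + 1) ^ 2 ≤ (2:ℝ) ^ b * ((2:ℝ) ^ a + 1) ^ 2 := by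
    nlinarith [mul_nonneg (sub_nonneg.2 hu) (by nlinarith : 0 ≤ 1 - (2:ℝ) ^ a * (2:ℝ) ^ b)]
  nlinarith

lemma convexOn_Phip : ConvexOn ℝ univ Phip :=
  monotone_dPhip.monotoneOn univ |>.convexOn_of_hasDerivAt convex_univ
    fun x _ => hasDerivAt_Phip x

lemma convexOn_dPhip : ConvexOn ℝ (Iic 0) dPhip :=
  monotoneOn_ddPhip.convexOn_of_hasDerivAt (convex_Iic 0) fun x _ => hasDerivAt_dPhip x

theorem stmt_0_general (Δ : ℝ) :
    ∀ i : ℝ, i ≤ 0 → ∀ r : ℝ, 0 ≤ r → r < Δ →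
      0 ≤ Ep i r ∧ Ep i r ≤ Ep 0 Δ ∧
      |Phip (i - r) - (Phip i - r * dPhip i)| ≤
        Phip (-Δ) - Phip 0 + Δ * dPhip 0 := by
  intro i hi r hr hrΔ
  have hnonneg : 0 ≤ Ep i r :=
    convexOn_Phip.firstOrderRemainder_nonneg (mem_univ _) (mem_univ _) (hasDerivAt_Phip i)
  have hle : Ep i r ≤ Ep 0 Δ :=
    calc Ep i r ≤ Ep 0 r :=
          convexOn_dPhip.monotoneOn_firstOrderRemainder (fun x _ => hasDerivAt_Phip x)
            (fun x _ => hasDerivAt_dPhip x) hr hi self_mem_Iic hi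
      _ ≤ Ep 0 Δ :=
          convexOn_Phip.firstOrderRemainder_le_of_le (fun x _ => hasDerivAt_Phip x)
            (mem_univ _) (mem_univ _) hr hrΔ.le
  refine ⟨hnonneg, hle, ?_⟩
  rw [show Phip (i - r) - (Phip i - r * dPhip i) = Ep i r by unfold Ep; ring,
    abs_of_nonneg hnonneg]
  simpa [Ep] using hle

theorem stmt_0 (Δ : ℝ) (hΔ : 0 < Δ) :
    ∀ i : ℝ, i ≤ 0 → ∀ r : ℝ, 0 ≤ r → r < Δ →
      0 ≤ Ep i r ∧ Ep i r ≤ Ep 0 Δ ∧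
      |Phip (i - r) - (Phip i - r * dPhip i)| ≤
        Phip (-Δ) - Phip 0 + Δ * dPhip 0 :=
  stmt_0_general Δ
end

section
/- Let Δ > 0 and fix a real r with 0 ≤ r < Δ. Then, as i → −∞, both error ratios Q⁺(i, r) and Q⁻(i, r) tend to the same limit (2^{−r} + r·ln 2 − 1)/(2^{−Δ} + Δ·ln 2 − 1); that is, Tendsto (fun i => Q⁺(i, r)) atBot and Tendsto (fun i => Q⁻(i, r)) atBot both converge to (2^{−r} + r·ln 2 − 1)/(2^{−Δ} + Δ·ln 2 − 1). -/
open Filter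

/-- Error ratio Q⁺(i, r) = E⁺(i, r)/E⁺(i, Δ) -/
noncomputable def Qp (Δ i r : ℝ) : ℝ := Ep i r / Ep i Δ

/-- Φ⁻(x) = log₂(1 − 2^x) -/
noncomputable def Phim (x : ℝ) : ℝ := Real.logb 2 (1 - (2:ℝ) ^ x)

/-- (Φ⁻)'(x) = −2^x / (1 − 2^x) -/
noncomputable def dPhim (x : ℝ) : ℝ := -(2:ℝ) ^ x / (1 - (2:ℝ) ^ x)

/-- First-order Taylor remainder E⁻(i, r) -/
noncomputable def Em (i r : ℝ) : ℝ := Phim (i - r) - Phim i + r * dPhim i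

/-- Error ratio Q⁻(i, r) = E⁻(i, r)/E⁻(i, Δ) -/
noncomputable def Qm (Δ i r : ℝ) : ℝ := Em i r / Em i Δ

open Topology

/-! Substituting `t = 2^i`, each remainder becomes `log₂(1 ± 2^(-r) t) - log₂(1 ± t) ± r t/(1 ± t)`,
a function of `t` vanishing at `t = 0` with derivative `±(2^(-r) + r ln 2 - 1)/ln 2` there. As
`i → -∞` we have `t → 0⁺`, so both ratios tend to the quotient of these derivatives, the sign and the
factor `ln 2` cancelling; the denominator `2^(-Δ) + Δ ln 2 - 1` is positive by `eˣ > 1 + x`. -/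

theorem tendsto_div_of_hasDerivAt {𝕜 : Type*} [NontriviallyNormedField 𝕜] {f g : 𝕜 → 𝕜}
    {a b x : 𝕜} (hf : HasDerivAt f a x) (hg : HasDerivAt g b x) (hfx : f x = 0) (hgx : g x = 0)
    (hb : b ≠ 0) : Tendsto (fun t => f t / g t) (𝓝[≠] x) (𝓝 (a / b)) := by
  refine ((hasDerivAt_iff_tendsto_slope.mp hf).div (hasDerivAt_iff_tendsto_slope.mp hg) hb).congr'
    (eventually_nhdsWithin_of_forall fun t (ht : t ≠ x) => ?_)
  rw [Pi.div_apply, slope_def_field, slope_def_field, hfx, hgx, sub_zero, sub_zero,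
    div_div_div_cancel_right₀ (sub_ne_zero.mpr ht)]

theorem tendsto_two_rpow_atBot_nhdsNE_zero :
    Tendsto (fun i : ℝ => (2 : ℝ) ^ i) atBot (𝓝[≠] 0) :=
  tendsto_nhdsWithin_of_tendsto_nhds_of_eventually_within _
    (tendsto_rpow_atBot_of_base_gt_one 2 one_lt_two)
    (Eventually.of_forall fun i => (Real.rpow_pos_of_pos two_pos i).ne')

theorem two_rpow_neg_add_mul_log_two_sub_one_pos {Δ : ℝ} (hΔ : 0 < Δ) :
    0 < (2 : ℝ) ^ (-Δ) + Δ * Real.log 2 - 1 := by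
  have hlog : 0 < Real.log 2 := Real.log_pos one_lt_two
  have hexp := Real.add_one_lt_exp (neg_ne_zero.mpr (mul_pos hΔ hlog).ne')
  rw [Real.rpow_def_of_pos two_pos, mul_comm, neg_mul]
  linarith

/-- `ln 2 · E^±(i, r)` as a function of `t = 2^i`, for `σ = ±1`. -/
noncomputable def scaledRemainder (σ r t : ℝ) : ℝ :=
  Real.log (1 + σ * (2 : ℝ) ^ (-r) * t) - Real.log (1 + σ * t) + r * Real.log 2 * (σ * t / (1 + σ * t))

theorem scaledRemainder_zero (σ r : ℝ) : scaledRemainder σ r 0 = 0 := by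
  simp [scaledRemainder]

theorem hasDerivAt_scaledRemainder (σ r : ℝ) :
    HasDerivAt (scaledRemainder σ r) (σ * ((2 : ℝ) ^ (-r) + r * Real.log 2 - 1)) 0 := by
  have hlin : ∀ c : ℝ, HasDerivAt (fun t : ℝ => 1 + c * t) c 0 := fun c => by
    simpa using ((hasDerivAt_id (0 : ℝ)).const_mul c).const_add 1
  have hfrac : HasDerivAt (fun t : ℝ => σ * t / (1 + σ * t)) σ 0 := by
    simpa using ((hasDerivAt_id (0 : ℝ)).const_mul σ).fun_div (hlin σ) (by simp)
  have h := (((hlin (σ * (2 : ℝ) ^ (-r))).log (by simp)).fun_sub ((hlin σ).log (by simp))).fun_add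
    (hfrac.const_mul (r * Real.log 2))
  refine h.congr_deriv ?_
  simp only [mul_zero, add_zero, div_one]
  ring

theorem Ep_eq_scaledRemainder (i r : ℝ) :
    Ep i r = scaledRemainder 1 r ((2 : ℝ) ^ i) / Real.log 2 := by
  have hlog : Real.log 2 ≠ 0 := (Real.log_pos one_lt_two).ne'
  rw [Ep, Phip, Phip, dPhip, Real.logb, Real.logb, scaledRemainder, Real.rpow_sub two_pos,
    Real.rpow_neg two_pos.le]
  field_simp
  ring_nf

theorem Em_eq_scaledRemainder (i r : ℝ) :
    Em i r = scaledRemainder (-1) r ((2 : ℝ) ^ i) / Real.log 2 := by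
  have hlog : Real.log 2 ≠ 0 := (Real.log_pos one_lt_two).ne'
  rw [Em, Phim, Phim, dPhim, Real.logb, Real.logb, scaledRemainder, Real.rpow_sub two_pos,
    Real.rpow_neg two_pos.le]
  field_simp
  ring_nf

theorem tendsto_scaledRemainder_div {σ Δ : ℝ} (hσ : σ ≠ 0) (hΔ : 0 < Δ) (r : ℝ) :
    Tendsto (fun i : ℝ => scaledRemainder σ r ((2 : ℝ) ^ i) / scaledRemainder σ Δ ((2 : ℝ) ^ i))
      atBot (𝓝 (((2 : ℝ) ^ (-r) + r * Real.log 2 - 1) / ((2 : ℝ) ^ (-Δ) + Δ * Real.log 2 - 1))) := by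
  have h := (tendsto_div_of_hasDerivAt (hasDerivAt_scaledRemainder σ r)
    (hasDerivAt_scaledRemainder σ Δ) (scaledRemainder_zero σ r) (scaledRemainder_zero σ Δ)
    (mul_ne_zero hσ (two_rpow_neg_add_mul_log_two_sub_one_pos hΔ).ne')).comp
    tendsto_two_rpow_atBot_nhdsNE_zero
  rwa [mul_div_mul_left _ _ hσ] at h

theorem stmt_5_general (Δ : ℝ) (hΔ : 0 < Δ) (r : ℝ) :
    Tendsto (fun i => Qp Δ i r) atBot
      (nhds (((2:ℝ) ^ (-r) + r * Real.log 2 - 1) /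
             ((2:ℝ) ^ (-Δ) + Δ * Real.log 2 - 1))) ∧
    Tendsto (fun i => Qm Δ i r) atBot
      (nhds (((2:ℝ) ^ (-r) + r * Real.log 2 - 1) /
             ((2:ℝ) ^ (-Δ) + Δ * Real.log 2 - 1))) := by
  have hlog : Real.log 2 ≠ 0 := (Real.log_pos one_lt_two).ne'
  constructor
  · refine (tendsto_scaledRemainder_div one_ne_zero hΔ r).congr fun i => ?_
    simp only [Qp, Ep_eq_scaledRemainder, div_div_div_cancel_right₀ hlog]
  · refine (tendsto_scaledRemainder_div (neg_ne_zero.mpr one_ne_zero) hΔ r).congr fun i => ?_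
    simp only [Qm, Em_eq_scaledRemainder, div_div_div_cancel_right₀ hlog]

theorem stmt_5 (Δ : ℝ) (hΔ : 0 < Δ) (r : ℝ) (hr0 : 0 ≤ r) (hrΔ : r < Δ) :
    Tendsto (fun i => Qp Δ i r) atBot
      (nhds (((2:ℝ) ^ (-r) + r * Real.log 2 - 1) /
             ((2:ℝ) ^ (-Δ) + Δ * Real.log 2 - 1))) ∧
    Tendsto (fun i => Qm Δ i r) atBot
      (nhds (((2:ℝ) ^ (-r) + r * Real.log 2 - 1) /
             ((2:ℝ) ^ (-Δ) + Δ * Real.log 2 - 1))) :=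
  stmt_5_general Δ hΔ r
end

section
/- Let Δ > 0 and fix a real r with 0 ≤ r < Δ. Then the error ratio Q⁺(i, r) is monotonically nonincreasing as a function of i on the set of reals i ≤ 0: for all i₁ ≤ i₂ ≤ 0, Q⁺(i₂, r) ≤ Q⁺(i₁, r). -/
open Set

section MonotoneLHopital

variable {f g f' g' : ℝ → ℝ} {a : ℝ}

lemma pos_of_hasDerivAt_pos_of_eq_zero (hg : ∀ x ∈ Ici a, HasDerivAt g (g' x) x)
    (hga : g a = 0) (hg' : ∀ x ∈ Ioi a, 0 < g' x) {x : ℝ} (hx : a < x) : 0 < g x := by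
  have hmono : StrictMonoOn g (Ici a) :=
    strictMonoOn_of_hasDerivWithinAt_pos (convex_Ici a)
      (fun y hy => (hg y hy).continuousAt.continuousWithinAt)
      (fun y hy => by
        rw [interior_Ici] at hy ⊢
        exact (hg y (mem_Ici_of_Ioi hy)).hasDerivWithinAt)
      (fun y hy => by rw [interior_Ici] at hy; exact hg' y hy)
  simpa [hga] using hmono self_mem_Ici hx.le hx

theorem monotoneOn_div_of_monotoneOn_deriv_div (hf : ∀ x ∈ Ici a, HasDerivAt f (f' x) x)
    (hg : ∀ x ∈ Ici a, HasDerivAt g (g' x) x) (hfa : f a = 0) (hga : g a = 0)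
    (hg' : ∀ x ∈ Ioi a, 0 < g' x) (hmono : MonotoneOn (fun x => f' x / g' x) (Ioi a)) :
    MonotoneOn (fun x => f x / g x) (Ioi a) := by
  have hgpos : ∀ x ∈ Ioi a, 0 < g x := fun x hx =>
    pos_of_hasDerivAt_pos_of_eq_zero hg hga hg' hx
  -- Cauchy's mean value theorem makes `f x / g x` a value of `f' / g'` on `(a, x)`.
  have hratio : ∀ x ∈ Ioi a, f x / g x ≤ f' x / g' x := by
    intro x hx
    obtain ⟨c, hc, hcx⟩ := exists_ratio_hasDerivAt_eq_ratio_slope f f' hx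
      (fun y hy => (hf y hy.1).continuousAt.continuousWithinAt) (fun y hy => hf y hy.1.le)
      g g' (fun y hy => (hg y hy.1).continuousAt.continuousWithinAt) (fun y hy => hg y hy.1.le)
    rw [hfa, hga, sub_zero, sub_zero] at hcx
    have hfc : f x / g x = f' c / g' c := by
      rw [div_eq_div_iff (hgpos x hx).ne' (hg' c hc.1).ne']
      linarith
    rw [hfc]
    exact hmono hc.1 hx hc.2.le
  refine monotoneOn_of_hasDerivWithinAt_nonneg (convex_Ioi a)
    (f' := fun x => (f' x * g x - f x * g' x) / g x ^ 2)
    (fun x hx => ((hf x (mem_Ici_of_Ioi hx)).continuousAt.div (hg x (mem_Ici_of_Ioi hx)).continuousAt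
      (hgpos x hx).ne').continuousWithinAt) (fun x hx => ?_) (fun x hx => ?_)
  all_goals rw [interior_Ioi] at hx
  · exact ((hf x (mem_Ici_of_Ioi hx)).div (hg x (mem_Ici_of_Ioi hx)) (hgpos x hx).ne').hasDerivWithinAt
  · have h := hratio x hx
    rw [div_le_div_iff₀ (hgpos x hx) (hg' x hx)] at h
    exact div_nonneg (by linarith) (sq_nonneg _)

end MonotoneLHopital

lemma dPhip_nonneg (x : ℝ) : 0 ≤ dPhip x := by
  unfold dPhip
  positivity

lemma dPhip_sub_dPhip_sub (i ρ : ℝ) :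
    dPhip i - dPhip (i - ρ) =
      (2:ℝ) ^ i * ((2:ℝ) ^ ρ - 1) / (((2:ℝ) ^ i + 1) * ((2:ℝ) ^ i + (2:ℝ) ^ ρ)) := by
  have hi : 0 < (2:ℝ) ^ i := by positivity
  have hρ : 0 < (2:ℝ) ^ ρ := by positivity
  rw [dPhip, dPhip, Real.rpow_sub two_pos]
  field_simp
  ring

lemma dPhip_sub_dPhip_sub_pos (i : ℝ) {ρ : ℝ} (hρ : 0 < ρ) : 0 < dPhip i - dPhip (i - ρ) := by
  have : 1 < (2:ℝ) ^ ρ := Real.one_lt_rpow one_lt_two hρ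
  rw [dPhip_sub_dPhip_sub]
  apply div_pos (mul_pos (by positivity) (by linarith)) (by positivity)

lemma dPhip_sub_dPhip_sub_div (i₁ i₂ : ℝ) {ρ : ℝ} (hρ : 0 < ρ) :
    (dPhip i₂ - dPhip (i₂ - ρ)) / (dPhip i₁ - dPhip (i₁ - ρ)) =
      dPhip i₂ / dPhip i₁ * (((2:ℝ) ^ i₁ + (2:ℝ) ^ ρ) / ((2:ℝ) ^ i₂ + (2:ℝ) ^ ρ)) := by
  have : (2:ℝ) ^ ρ - 1 ≠ 0 := (sub_pos.2 (Real.one_lt_rpow one_lt_two hρ)).ne'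
  have h₁ : 0 < (2:ℝ) ^ i₁ := by positivity
  have h₂ : 0 < (2:ℝ) ^ i₂ := by positivity
  rw [dPhip_sub_dPhip_sub, dPhip_sub_dPhip_sub, dPhip, dPhip]
  field_simp

lemma add_div_add_le_add_div_add {p q s t : ℝ} (hp : 0 ≤ p) (hpq : p ≤ q) (hs : 0 < s)
    (hst : s ≤ t) : (p + s) / (q + s) ≤ (p + t) / (q + t) := by
  rw [div_le_div_iff₀ (by linarith) (by linarith)]
  nlinarith [mul_nonneg (sub_nonneg.2 hpq) (sub_nonneg.2 hst)]

lemma monotoneOn_dPhip_sub_dPhip_sub_div {i₁ i₂ : ℝ} (h : i₁ ≤ i₂) :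
    MonotoneOn (fun ρ => (dPhip i₂ - dPhip (i₂ - ρ)) / (dPhip i₁ - dPhip (i₁ - ρ))) (Ioi 0) := by
  intro ρ hρ σ hσ hρσ
  dsimp only
  rw [dPhip_sub_dPhip_sub_div i₁ i₂ hρ, dPhip_sub_dPhip_sub_div i₁ i₂ hσ]
  refine mul_le_mul_of_nonneg_left (add_div_add_le_add_div_add (by positivity) ?_ (by positivity)
    ?_) (div_nonneg (dPhip_nonneg _) (dPhip_nonneg _))
  · exact Real.rpow_le_rpow_of_exponent_le one_le_two h
  · exact Real.rpow_le_rpow_of_exponent_le one_le_two hρσ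

lemma hasDerivAt_Ep (i ρ : ℝ) : HasDerivAt (Ep i) (dPhip i - dPhip (i - ρ)) ρ := by
  have h := (((hasDerivAt_Phip (i - ρ)).comp ρ ((hasDerivAt_id ρ).const_sub i)).sub_const
    (Phip i)).add ((hasDerivAt_id ρ).mul_const (dPhip i))
  refine h.congr_deriv ?_
  ring

lemma Ep_zero (i : ℝ) : Ep i 0 = 0 := by simp [Ep]

lemma Ep_pos (i : ℝ) {ρ : ℝ} (hρ : 0 < ρ) : 0 < Ep i ρ :=
  pos_of_hasDerivAt_pos_of_eq_zero (fun ρ _ => hasDerivAt_Ep i ρ) (Ep_zero i)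
    (fun _ hρ => dPhip_sub_dPhip_sub_pos i hρ) hρ

lemma monotoneOn_Ep_div_Ep {i₁ i₂ : ℝ} (h : i₁ ≤ i₂) :
    MonotoneOn (fun ρ => Ep i₂ ρ / Ep i₁ ρ) (Ioi 0) :=
  monotoneOn_div_of_monotoneOn_deriv_div (fun ρ _ => hasDerivAt_Ep i₂ ρ)
    (fun ρ _ => hasDerivAt_Ep i₁ ρ) (Ep_zero i₂) (Ep_zero i₁)
    (fun _ hρ => dPhip_sub_dPhip_sub_pos i₁ hρ) (monotoneOn_dPhip_sub_dPhip_sub_div h)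

theorem stmt_6_general (Δ : ℝ) (r : ℝ) (hr0 : 0 ≤ r) (hrΔ : r < Δ) :
    ∀ i₁ i₂ : ℝ, i₁ ≤ i₂ → i₂ ≤ 0 → Qp Δ i₂ r ≤ Qp Δ i₁ r := by
  intro i₁ i₂ h12 _
  rcases hr0.eq_or_lt with rfl | hr
  · simp [Qp, Ep_zero]
  have hΔ : 0 < Δ := hr.trans hrΔ
  have h := monotoneOn_Ep_div_Ep h12 hr hΔ hrΔ.le
  dsimp only at h
  rw [div_le_div_iff₀ (Ep_pos i₁ hr) (Ep_pos i₁ hΔ)] at h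
  rw [Qp, Qp, div_le_div_iff₀ (Ep_pos i₂ hΔ) (Ep_pos i₁ hΔ)]
  linarith

theorem stmt_6 (Δ : ℝ) (hΔ : 0 < Δ) (r : ℝ) (hr0 : 0 ≤ r) (hrΔ : r < Δ) :
    ∀ i₁ i₂ : ℝ, i₁ ≤ i₂ → i₂ ≤ 0 → Qp Δ i₂ r ≤ Qp Δ i₁ r :=
  stmt_6_general Δ r hr0 hrΔ
end

section
/- For all real numbers A > 0 and B ≥ 1, the quantity K(A, B) = A²·ln(A + B) − A²·ln(A + 1) − A·B + A + B·ln B + B·ln(A + 1) − B·ln(A + B) satisfies K(A, B) ≤ 0. -/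
/-!
As a function of `B`, `K(A, B)` vanishes at `B = 1` and its derivative is
`ln (B (A + 1) / (A + B)) - A (B - 1) / (A + B)`, which is nonpositive by `ln x ≤ x - 1`
(the bound `x - 1` is exactly `A (B - 1) / (A + B)`). Hence `K(A, ·)` decreases from `0`.
-/

open Real Set

namespace TaylorRemainderRatio

noncomputable def K (A b : ℝ) : ℝ :=
  A ^ 2 * log (A + b) - A ^ 2 * log (A + 1) - A * b + A
    + b * log b + b * log (A + 1) - b * log (A + b)

lemma K_one (A : ℝ) : K A 1 = 0 := by
  simp only [K, log_one]
  ring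

lemma hasDerivAt_K {A b : ℝ} (hb : b ≠ 0) (hAb : A + b ≠ 0) :
    HasDerivAt (K A) (log b + log (A + 1) - log (A + b) - A * (b - 1) / (A + b)) b := by
  have hlogAb : HasDerivAt (fun x => log (A + x)) (1 / (A + b)) b := by
    simpa using ((hasDerivAt_id b).const_add A).log hAb
  have hlogb : HasDerivAt log (1 / b) b := by
    simpa [one_div] using hasDerivAt_log hb
  have h := ((((((hlogAb.const_mul (A ^ 2)).sub_const (A ^ 2 * log (A + 1))).sub
      ((hasDerivAt_id b).const_mul A)).add_const A).add
      ((hasDerivAt_id b).mul hlogb)).add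
      ((hasDerivAt_id b).mul_const (log (A + 1)))).sub
      ((hasDerivAt_id b).mul hlogAb)
  refine h.congr_deriv ?_
  simp only [id]
  field_simp
  ring

lemma log_add_log_sub_log_le {A b : ℝ} (hA : 0 ≤ A) (hb : 0 < b) :
    log b + log (A + 1) - log (A + b) ≤ A * (b - 1) / (A + b) := by
  have hAb : 0 < A + b := by linarith
  rw [← log_mul hb.ne' (by linarith), ← log_div (by positivity) hAb.ne']
  calc log (b * (A + 1) / (A + b)) ≤ b * (A + 1) / (A + b) - 1 :=
        log_le_sub_one_of_pos (by positivity)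
    _ = A * (b - 1) / (A + b) := by field_simp; ring

lemma antitoneOn_K {A : ℝ} (hA : 0 ≤ A) : AntitoneOn (K A) (Ioi 0) := by
  have hderiv : ∀ b ∈ Ioi (0 : ℝ),
      HasDerivAt (K A) (log b + log (A + 1) - log (A + b) - A * (b - 1) / (A + b)) b :=
    fun b hb => hasDerivAt_K (ne_of_gt hb) (by linarith [mem_Ioi.1 hb])
  refine antitoneOn_of_hasDerivWithinAt_nonpos (convex_Ioi 0)
    (f' := fun b => log b + log (A + 1) - log (A + b) - A * (b - 1) / (A + b))
    (fun b hb => (hderiv b hb).continuousAt.continuousWithinAt) ?_ ?_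
  · rw [interior_Ioi]
    exact fun b hb => (hderiv b hb).hasDerivWithinAt
  · rw [interior_Ioi]
    exact fun b hb => sub_nonpos.2 (log_add_log_sub_log_le hA hb)

end TaylorRemainderRatio

open TaylorRemainderRatio in
theorem stmt_7 (A B : ℝ) (hA : 0 < A) (hB : 1 ≤ B) :
    A ^ 2 * Real.log (A + B) - A ^ 2 * Real.log (A + 1) - A * B + A
      + B * Real.log B + B * Real.log (A + 1) - B * Real.log (A + B) ≤ 0 :=
  (antitoneOn_K hA.le (mem_Ioi.2 one_pos) (mem_Ioi.2 (by linarith)) hB).trans_eq (K_one A)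
end

section
/- Let ε ≥ 0, Δ > 0, 0 < Δ_P ≤ Δ. Let i ≤ 0, c ≤ 0, 0 ≤ r̂ ≤ r < Δ with r − r̂ ≤ Δ_P. Let a, b, e, p, m, q be reals with |a − Φ⁺(i)| ≤ ε, |b − (Φ⁺)'(i)| ≤ ε, |e − E⁺(i, Δ)| ≤ ε, |p − Q⁺(c, r̂)| ≤ ε, |p| ≤ 1, |m − r·b| ≤ ε, |q − e·p| ≤ ε. Then the error-correction approximation a − m + q of Φ⁺(i − r) satisfies |Φ⁺(i − r) − (a − m + q)| ≤ (4 + Δ)·ε + E⁺(0, Δ)·(Q_R + Q_I + ε), where Q_R = Q⁺_sup(r*) − Q⁺_min(r*) with Q⁺_sup(r) = (2^{−r} + r·ln 2 − 1)/(2^{−Δ} + Δ·ln 2 − 1), Q⁺_min(r) = Q⁺(0, r), r* = log₂( −X·(2·ln(X+1) − ln X − 2·ln 2) / (2X·(ln(X+1) − ln X − ln 2) + X − 1) ) with X = 2^Δ, and Q_I = 1 − Q⁺(0, Δ − Δ_P). -/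
/-- Q⁺_sup(r) = (2^{−r} + r·ln 2 − 1)/(2^{−Δ} + Δ·ln 2 − 1) -/
noncomputable def QpSup (Δ r : ℝ) : ℝ :=
  ((2:ℝ) ^ (-r) + r * Real.log 2 - 1) / ((2:ℝ) ^ (-Δ) + Δ * Real.log 2 - 1)

/-- Q⁺_min(r) = Q⁺(0, r) -/
noncomputable def QpMin (Δ r : ℝ) : ℝ := Qp Δ 0 r

/-- r* for the addition case, with X = 2^Δ -/
noncomputable def rStarP (Δ : ℝ) : ℝ :=
  Real.logb 2
    (-(2:ℝ) ^ Δ * (2 * Real.log ((2:ℝ) ^ Δ + 1) - Real.log ((2:ℝ) ^ Δ) - 2 * Real.log 2) /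
      (2 * (2:ℝ) ^ Δ * (Real.log ((2:ℝ) ^ Δ + 1) - Real.log ((2:ℝ) ^ Δ) - Real.log 2)
        + (2:ℝ) ^ Δ - 1))

/-!
Write `t = 2 ^ i ∈ (0, 1]`; then `E⁺(i, s) · log 2 = rem t s` with
`rem t s = log (1 + t 2⁻ˢ) - log (1 + t) + s log 2 · t / (1 + t)`.
The total error splits into the rounding errors of `a`, `m`, `q`, the error `r (b - Φ⁺'(i))`, and
`E⁺(i, Δ) (Q⁺(i, r) - Q⁺(c, r̂))` with `E⁺(i, Δ) ≤ E⁺(0, Δ)`. Since `∂ₜ∂ₛ rem / ∂ₛ rem` increases in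
`s`, a monotone l'Hôpital rule shows that `rem t s / rem t Δ` decreases in `t`; so `Q⁺(i, r)` lies
between `Q⁺_min(r)`, its value at `t = 1`, and `Q⁺_sup(r)`, its limit as `t → 0`. The gap
`Q⁺_sup - Q⁺_min` is maximal at its critical point `r*`, and `Q⁺_min(r) - Q⁺_min(r̂) ≤ Q_I` because
`rem 1` is convex.
-/

open Real Set Filter Topology

-- Monotone l'Hôpital rule: `f / g` increases on `(a, ∞)` if `f' / g' = τ` does.
theorem mul_le_mul_of_hasDerivAt_eq_mul_deriv {f g g' τ : ℝ → ℝ} {a x y : ℝ}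
    (hf : ∀ z, HasDerivAt f (τ z * g' z) z) (hg : ∀ z, HasDerivAt g (g' z) z)
    (hfa : f a = 0) (hga : g a = 0) (hg' : ∀ z ∈ Ioi a, 0 < g' z) (hτ : MonotoneOn τ (Ioi a))
    (hax : a < x) (hxy : x ≤ y) : f x * g y ≤ f y * g x := by
  rcases hxy.eq_or_lt with rfl | hxy
  · rfl
  have cauchy_mvt {u v : ℝ} (hau : a ≤ u) (huv : u < v) :
      ∃ c ∈ Ioo u v, f v - f u = τ c * (g v - g u) := by
    obtain ⟨c, hc, h⟩ := exists_ratio_hasDerivAt_eq_ratio_slope f _ huv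
      (fun z _ => (hf z).continuousAt.continuousWithinAt) (fun z _ => hf z) g g'
      (fun z _ => (hg z).continuousAt.continuousWithinAt) (fun z _ => hg z)
    exact ⟨c, hc, mul_right_cancel₀ (hg' c (hau.trans_lt hc.1)).ne' (by linear_combination -h)⟩
  obtain ⟨c₁, hc₁, h₁⟩ := cauchy_mvt le_rfl hax
  obtain ⟨c₂, hc₂, h₂⟩ := cauchy_mvt hax.le hxy
  rw [hfa, hga, sub_zero, sub_zero] at h₁
  have hg_mono : StrictMonoOn g (Ici a) :=
    strictMonoOn_of_hasDerivWithinAt_pos (convex_Ici a)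
      (fun z _ => (hg z).continuousAt.continuousWithinAt)
      (fun z _ => (hg z).hasDerivWithinAt) (fun z hz => hg' z (by simpa using hz))
  have hgx : 0 < g x := hga ▸ hg_mono self_mem_Ici hax.le hax
  have hgxy : g x < g y := hg_mono hax.le (hax.trans hxy).le hxy
  have hτ₁₂ : τ c₁ ≤ τ c₂ := hτ hc₁.1 (hax.trans hc₂.1) (hc₁.2.trans hc₂.1).le
  -- `f x * g y - f y * g x = (τ c₁ - τ c₂) * g x * (g y - g x)`
  nlinarith [mul_nonneg (mul_nonneg hgx.le (sub_nonneg.2 hgxy.le)) (sub_nonneg.2 hτ₁₂)]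

theorem sub_le_sub_of_hasDerivAt_of_monotone {f f' : ℝ → ℝ} (hf : ∀ x, HasDerivAt f (f' x) x)
    (hf' : Monotone f') {d x y : ℝ} (hd : 0 ≤ d) (hxy : x ≤ y) :
    f (x + d) - f x ≤ f (y + d) - f y := by
  have hshift (z : ℝ) : HasDerivAt (fun z => f (z + d) - f z) (f' (z + d) - f' z) z :=
    ((hf (z + d)).comp_add_const z d).sub (hf z)
  exact monotone_of_hasDerivAt_nonneg hshift
    (fun z => sub_nonneg.2 (hf' (le_add_of_nonneg_right hd))) hxy

theorem abs_mul_sub_le_of_approx {E E₀ Q Q' δ e p q ε : ℝ} (hE : 0 ≤ E) (hEE₀ : E ≤ E₀)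
    (hQ : |Q - Q'| ≤ δ) (he : |e - E| ≤ ε) (hp : |p - Q'| ≤ ε) (hp1 : |p| ≤ 1)
    (hq : |q - e * p| ≤ ε) : |E * Q - q| ≤ E₀ * (δ + ε) + 2 * ε := by
  have hδε : 0 ≤ δ + ε := add_nonneg ((abs_nonneg _).trans hQ) ((abs_nonneg _).trans he)
  have h₁ : |E * (Q - Q')| ≤ E * δ := by
    rw [abs_mul, abs_of_nonneg hE]; exact mul_le_mul_of_nonneg_left hQ hE
  have h₂ : |E * (Q' - p)| ≤ E * ε := by
    rw [abs_mul, abs_of_nonneg hE, abs_sub_comm]; exact mul_le_mul_of_nonneg_left hp hE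
  have h₃ : |p * (E - e)| ≤ ε := by
    rw [abs_mul, abs_sub_comm]
    exact (mul_le_mul hp1 he (abs_nonneg _) zero_le_one).trans_eq (one_mul ε)
  have h₄ : |e * p - q| ≤ ε := by rwa [abs_sub_comm]
  calc |E * Q - q|
      = |E * (Q - Q') + E * (Q' - p) + p * (E - e) + (e * p - q)| := by congr 1; ring
    _ ≤ |E * (Q - Q')| + |E * (Q' - p)| + |p * (E - e)| + |e * p - q| :=
      (abs_add_le _ _).trans (add_le_add_left (abs_add_three _ _ _) _)
    _ ≤ E * (δ + ε) + 2 * ε := by linarith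
    _ ≤ E₀ * (δ + ε) + 2 * ε := by gcongr

namespace LNS

noncomputable def rem (t s : ℝ) : ℝ :=
  log (1 + t * 2 ^ (-s)) - log (1 + t) + log 2 * s * (t / (1 + t))

noncomputable def remDerivS (t s : ℝ) : ℝ :=
  log 2 * (t / (1 + t) - t * 2 ^ (-s) / (1 + t * 2 ^ (-s)))

noncomputable def remDerivT (t s : ℝ) : ℝ :=
  2 ^ (-s) / (1 + t * 2 ^ (-s)) - 1 / (1 + t) + log 2 * s / (1 + t) ^ 2

noncomputable def remDerivRatio (t s : ℝ) : ℝ :=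
  (1 - t ^ 2 * 2 ^ (-s)) / (t * (1 + t) * (1 + t * 2 ^ (-s)))

theorem two_rpow_neg_le_one {s : ℝ} (hs : 0 ≤ s) : (2 : ℝ) ^ (-s) ≤ 1 :=
  rpow_le_one_of_one_le_of_nonpos one_le_two (neg_nonpos.2 hs)

theorem two_rpow_neg_lt_one {s : ℝ} (hs : 0 < s) : (2 : ℝ) ^ (-s) < 1 :=
  rpow_lt_one_of_one_lt_of_neg one_lt_two (neg_neg_of_pos hs)

theorem two_rpow_neg_strictAnti : StrictAnti fun s : ℝ => (2 : ℝ) ^ (-s) :=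
  fun _ _ h => rpow_lt_rpow_left_iff one_lt_two |>.2 (neg_lt_neg h)

theorem hasDerivAt_two_rpow_neg (s : ℝ) :
    HasDerivAt (fun s : ℝ => (2 : ℝ) ^ (-s)) (-(log 2 * 2 ^ (-s))) s := by
  refine ((hasStrictDerivAt_const_rpow two_pos (-s)).hasDerivAt.comp s
    (hasDerivAt_neg s)).congr_deriv ?_
  ring

theorem hasDerivAt_rem_right {t : ℝ} (ht : 0 < t) (s : ℝ) :
    HasDerivAt (rem t) (remDerivS t s) s := by
  have hw := (hasDerivAt_two_rpow_neg s).const_mul t |>.const_add 1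
  have hlog := hw.log (by positivity)
  have hlin := ((hasDerivAt_id s).const_mul (log 2)).mul_const (t / (1 + t))
  refine ((hlog.sub_const (log (1 + t))).add hlin).congr_deriv ?_
  simp only [remDerivS]
  field_simp
  ring

theorem hasDerivAt_rem_left {t s : ℝ} (h₁ : 0 < 1 + t * 2 ^ (-s)) (h₂ : 0 < 1 + t) :
    HasDerivAt (fun t => rem t s) (remDerivT t s) t := by
  have hw := ((hasDerivAt_id t).mul_const ((2 : ℝ) ^ (-s))).const_add 1
  have h1t := (hasDerivAt_id t).const_add 1
  have hfrac := ((hasDerivAt_id t).div h1t h₂.ne').const_mul (log 2 * s)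
  refine (((hw.log h₁.ne').sub (h1t.log h₂.ne')).add hfrac).congr_deriv ?_
  simp only [remDerivT, id]
  field_simp
  ring

theorem hasDerivAt_remDerivT_right {t : ℝ} (ht : 0 < t) (s : ℝ) :
    HasDerivAt (remDerivT t) (remDerivRatio t s * remDerivS t s) s := by
  have hw := hasDerivAt_two_rpow_neg s
  have hden : 0 < 1 + t * (2 : ℝ) ^ (-s) := by positivity
  have hq := hw.div (hw.const_mul t |>.const_add 1) hden.ne'
  have hlin := ((hasDerivAt_id s).const_mul (log 2)).div_const ((1 + t) ^ 2)
  refine ((hq.sub_const (1 / (1 + t))).add hlin).congr_deriv ?_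
  simp only [remDerivRatio, remDerivS]
  field_simp
  ring

@[simp] theorem rem_zero_left (s : ℝ) : rem 0 s = 0 := by simp [rem]

@[simp] theorem rem_zero_right (t : ℝ) : rem t 0 = 0 := by simp [rem]

@[simp] theorem remDerivS_zero_right (t : ℝ) : remDerivS t 0 = 0 := by simp [remDerivS]

@[simp] theorem remDerivT_zero_right (t : ℝ) : remDerivT t 0 = 0 := by simp [remDerivT]

theorem remDerivT_zero_left (s : ℝ) : remDerivT 0 s = 2 ^ (-s) + s * log 2 - 1 := by
  simp only [remDerivT]; ring

theorem remDerivS_strictMono {t : ℝ} (ht : 0 < t) : StrictMono (remDerivS t) := by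
  intro s₁ s₂ h
  have hw := two_rpow_neg_strictAnti h
  have hw₂ : 0 < (2 : ℝ) ^ (-s₂) := by positivity
  have hfrac : t * 2 ^ (-s₂) / (1 + t * 2 ^ (-s₂)) < t * 2 ^ (-s₁) / (1 + t * 2 ^ (-s₁)) := by
    rw [div_lt_div_iff₀ (by positivity) (by positivity)]
    nlinarith [mul_lt_mul_of_pos_left hw ht]
  simp only [remDerivS]
  gcongr

theorem remDerivS_pos {t s : ℝ} (ht : 0 < t) (hs : 0 < s) : 0 < remDerivS t s :=
  remDerivS_zero_right t ▸ remDerivS_strictMono ht hs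

theorem rem_strictMonoOn {t : ℝ} (ht : 0 < t) : StrictMonoOn (rem t) (Ici 0) :=
  strictMonoOn_of_hasDerivWithinAt_pos (convex_Ici 0)
    (fun s _ => (hasDerivAt_rem_right ht s).continuousAt.continuousWithinAt)
    (fun s _ => (hasDerivAt_rem_right ht s).hasDerivWithinAt)
    (fun s hs => remDerivS_pos ht (by simpa using hs))

theorem rem_pos {t s : ℝ} (ht : 0 < t) (hs : 0 < s) : 0 < rem t s :=
  rem_zero_right t ▸ rem_strictMonoOn ht self_mem_Ici hs.le hs

theorem remDerivRatio_monotone {t : ℝ} (ht : 0 < t) : Monotone (remDerivRatio t) := by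
  intro s₁ s₂ h
  have hw := two_rpow_neg_strictAnti.antitone h
  have hw₂ : 0 < (2 : ℝ) ^ (-s₂) := by positivity
  simp only [remDerivRatio]
  rw [div_le_div_iff₀ (by positivity) (by positivity)]
  nlinarith [mul_nonneg (sq_nonneg (t * (1 + t))) (sub_nonneg.2 hw)]

theorem remDerivT_mul_rem_le {t s₁ s₂ : ℝ} (ht : 0 < t) (hs₁ : 0 < s₁) (h : s₁ ≤ s₂) :
    remDerivT t s₁ * rem t s₂ ≤ remDerivT t s₂ * rem t s₁ :=
  mul_le_mul_of_hasDerivAt_eq_mul_deriv (hasDerivAt_remDerivT_right ht)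
    (hasDerivAt_rem_right ht) (remDerivT_zero_right t) (rem_zero_right t)
    (fun _ hs => remDerivS_pos ht hs) ((remDerivRatio_monotone ht).monotoneOn _) hs₁ h

theorem remDerivT_nonneg {t s : ℝ} (ht : 0 < t) (ht₁ : t ≤ 1) (hs : 0 ≤ s) :
    0 ≤ remDerivT t s := by
  have hmono : MonotoneOn (remDerivT t) (Ici 0) :=
    monotoneOn_of_hasDerivWithinAt_nonneg (convex_Ici 0)
      (fun x _ => (hasDerivAt_remDerivT_right ht x).continuousAt.continuousWithinAt)
      (fun x _ => (hasDerivAt_remDerivT_right ht x).hasDerivWithinAt)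
      (fun x hx => by
        rw [interior_Ici, mem_Ioi] at hx
        have hw := two_rpow_neg_le_one hx.le
        have hw₀ : 0 < (2 : ℝ) ^ (-x) := by positivity
        have hτ : 0 ≤ remDerivRatio t x := by
          refine div_nonneg ?_ (by positivity)
          nlinarith [mul_le_one₀ ht₁ ht.le ht₁]
        exact mul_nonneg hτ (remDerivS_pos ht hx).le)
  simpa using hmono self_mem_Ici hs hs

theorem rem_monotoneOn_left {s : ℝ} (hs : 0 ≤ s) : MonotoneOn (fun t => rem t s) (Ioc 0 1) := by
  have hderiv {t : ℝ} (ht : 0 < t) : HasDerivAt (fun t => rem t s) (remDerivT t s) t :=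
    hasDerivAt_rem_left (by positivity) (by positivity)
  refine monotoneOn_of_hasDerivWithinAt_nonneg (f' := fun t => remDerivT t s) (convex_Ioc 0 1)
    (fun t ht => (hderiv ht.1).continuousAt.continuousWithinAt)
    (fun t ht => ?_) (fun t ht => ?_) <;> rw [interior_Ioc] at ht
  · exact (hderiv ht.1).hasDerivWithinAt
  · exact remDerivT_nonneg ht.1 ht.2.le hs

theorem rem_div_rem_antitoneOn {s Δ : ℝ} (hs : 0 ≤ s) (hsΔ : s ≤ Δ) :
    AntitoneOn (fun t => rem t s / rem t Δ) (Ioi 0) := by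
  rcases hs.eq_or_lt with rfl | hs
  · simpa using antitoneOn_const
  have hderiv {t : ℝ} (ht : 0 < t) : HasDerivAt (fun t => rem t s / rem t Δ)
      ((remDerivT t s * rem t Δ - rem t s * remDerivT t Δ) / rem t Δ ^ 2) t :=
    (hasDerivAt_rem_left (by positivity) (by positivity)).div
      (hasDerivAt_rem_left (by positivity) (by positivity)) (rem_pos ht (hs.trans_le hsΔ)).ne'
  refine antitoneOn_of_hasDerivWithinAt_nonpos (convex_Ioi 0)
    (f' := fun t => (remDerivT t s * rem t Δ - rem t s * remDerivT t Δ) / rem t Δ ^ 2)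
    (fun t ht => (hderiv ht).continuousAt.continuousWithinAt)
    (fun t ht => ?_) (fun t ht => ?_) <;> rw [interior_Ioi] at ht
  · exact (hderiv ht).hasDerivWithinAt
  · refine div_nonpos_of_nonpos_of_nonneg ?_ (sq_nonneg _)
    linarith [remDerivT_mul_rem_le ht hs hsΔ]

theorem two_rpow_neg_add_mul_log_two_sub_one_pos {s : ℝ} (hs : 0 < s) :
    0 < (2 : ℝ) ^ (-s) + s * log 2 - 1 := by
  have hexp := add_one_lt_exp (x := log 2 * -s)
    (mul_ne_zero (log_pos one_lt_two).ne' (neg_ne_zero.2 hs.ne'))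
  rw [rpow_def_of_pos two_pos]
  linarith

theorem tendsto_rem_div_rem {s Δ : ℝ} (hΔ : 0 < Δ) :
    Tendsto (fun t => rem t s / rem t Δ) (𝓝[>] 0) (𝓝 (remDerivT 0 s / remDerivT 0 Δ)) := by
  have hslope (u : ℝ) : Tendsto (fun t => rem t u / t) (𝓝[>] 0) (𝓝 (remDerivT 0 u)) := by
    have h := hasDerivAt_iff_tendsto_slope.mp (hasDerivAt_rem_left (s := u) (t := 0)
      (by norm_num) (by norm_num))
    have h' : Tendsto (slope (fun t => rem t u) 0) (𝓝[>] 0) (𝓝 (remDerivT 0 u)) :=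
      h.mono_left (nhdsWithin_mono 0 fun t (ht : 0 < t) => ht.ne')
    refine h'.congr fun t => ?_
    rw [slope_def_field, rem_zero_left, sub_zero, sub_zero]
  have hΔ' : remDerivT 0 Δ ≠ 0 := by
    rw [remDerivT_zero_left]; exact (two_rpow_neg_add_mul_log_two_sub_one_pos hΔ).ne'
  refine ((hslope s).div (hslope Δ) hΔ').congr' ?_
  filter_upwards [self_mem_nhdsWithin] with t ht
  exact div_div_div_cancel_right₀ (ne_of_gt ht) _ _

theorem Ep_eq_rem (i s : ℝ) : Ep i s = rem (2 ^ i) s / log 2 := by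
  have hmul : (2 : ℝ) ^ i * 2 ^ (-s) = 2 ^ (i - s) := by
    rw [← rpow_add two_pos, sub_eq_add_neg]
  have := log_pos one_lt_two
  simp only [Ep, Phip, dPhip, rem, logb, hmul]
  field_simp
  ring

theorem Qp_eq_rem (Δ i s : ℝ) : Qp Δ i s = rem (2 ^ i) s / rem (2 ^ i) Δ := by
  rw [Qp, Ep_eq_rem, Ep_eq_rem, div_div_div_cancel_right₀ (log_pos one_lt_two).ne']

theorem QpMin_eq_rem (Δ s : ℝ) : QpMin Δ s = rem 1 s / rem 1 Δ := by
  rw [QpMin, Qp_eq_rem, rpow_zero]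

theorem QpSup_eq_remDerivT (Δ s : ℝ) : QpSup Δ s = remDerivT 0 s / remDerivT 0 Δ := by
  simp only [QpSup, remDerivT_zero_left]

theorem two_rpow_mem_Ioc {i : ℝ} (hi : i ≤ 0) : (2 : ℝ) ^ i ∈ Ioc 0 1 :=
  ⟨by positivity, rpow_le_one_of_one_le_of_nonpos one_le_two hi⟩

theorem Ep_pos (i : ℝ) {Δ : ℝ} (hΔ : 0 < Δ) : 0 < Ep i Δ := by
  rw [Ep_eq_rem]
  exact div_pos (rem_pos (by positivity) hΔ) (log_pos one_lt_two)

theorem Ep_le_Ep_zero {i Δ : ℝ} (hi : i ≤ 0) (hΔ : 0 ≤ Δ) : Ep i Δ ≤ Ep 0 Δ := by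
  have := log_pos one_lt_two
  rw [Ep_eq_rem, Ep_eq_rem, rpow_zero]
  gcongr
  exact rem_monotoneOn_left hΔ (two_rpow_mem_Ioc hi) ⟨one_pos, le_rfl⟩ (two_rpow_mem_Ioc hi).2

theorem QpMin_le_Qp {Δ i s : ℝ} (hi : i ≤ 0) (hs : 0 ≤ s) (hsΔ : s ≤ Δ) :
    QpMin Δ s ≤ Qp Δ i s := by
  rw [QpMin_eq_rem, Qp_eq_rem]
  exact rem_div_rem_antitoneOn hs hsΔ (two_rpow_mem_Ioc hi).1 (mem_Ioi.2 one_pos)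
    (two_rpow_mem_Ioc hi).2

theorem Qp_le_QpSup {Δ i s : ℝ} (hΔ : 0 < Δ) (hi : i ≤ 0) (hs : 0 ≤ s) (hsΔ : s ≤ Δ) :
    Qp Δ i s ≤ QpSup Δ s := by
  rw [Qp_eq_rem, QpSup_eq_remDerivT]
  have ht := (two_rpow_mem_Ioc hi).1
  refine ge_of_tendsto (tendsto_rem_div_rem hΔ) ?_
  filter_upwards [Ioc_mem_nhdsGT ht] with t ht'
  exact rem_div_rem_antitoneOn hs hsΔ ht'.1 ht ht'.2

theorem QpMin_monotoneOn {Δ : ℝ} (hΔ : 0 < Δ) : MonotoneOn (QpMin Δ) (Ici 0) := by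
  intro x hx y hy hxy
  simp only [QpMin_eq_rem]
  exact div_le_div_of_nonneg_right ((rem_strictMonoOn one_pos).monotoneOn hx hy hxy)
    (rem_pos one_pos hΔ).le

theorem QpMin_sub_QpMin_le {Δ ΔP r rhat : ℝ} (hΔ : 0 < Δ) (hΔPΔ : ΔP ≤ Δ) (hrhat0 : 0 ≤ rhat)
    (hrhatr : rhat ≤ r) (hrΔ : r ≤ Δ) (hround : r - rhat ≤ ΔP) :
    QpMin Δ r - QpMin Δ rhat ≤ 1 - Qp Δ 0 (Δ - ΔP) := by
  have hincr : rem 1 r - rem 1 rhat ≤ rem 1 Δ - rem 1 (Δ - (r - rhat)) := by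
    simpa using sub_le_sub_of_hasDerivAt_of_monotone (hasDerivAt_rem_right one_pos)
      (remDerivS_strictMono one_pos).monotone (sub_nonneg.2 hrhatr)
      (show rhat ≤ Δ - (r - rhat) by linarith)
  have hmono : rem 1 (Δ - ΔP) ≤ rem 1 (Δ - (r - rhat)) :=
    (rem_strictMonoOn one_pos).monotoneOn (sub_nonneg.2 hΔPΔ) (by simp; linarith) (by linarith)
  have hΔ' := rem_pos one_pos hΔ
  rw [← QpMin, QpMin_eq_rem, QpMin_eq_rem, QpMin_eq_rem, div_sub_div_same,
    one_sub_div hΔ'.ne']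
  exact div_le_div_of_nonneg_right (by linarith) hΔ'.le

theorem two_mul_log_one_add_lt {u : ℝ} (hu₀ : 0 < u) (hu₁ : u < 1) :
    2 * log (1 + u) < u - 1 + 2 * log 2 := by
  have h := log_lt_sub_one_of_pos (x := (1 + u) / 2) (by positivity)
    (by intro h; field_simp at h; linarith)
  rw [log_div (by positivity) two_ne_zero] at h
  linarith

theorem log_add_sub_one_lt_four_mul_log {u : ℝ} (hu₀ : 0 < u) (hu₁ : u < 1) :
    log u + u - 1 < 4 * (log (1 + u) - log 2) := by
  set h : ℝ → ℝ := fun x => 4 * (log (1 + x) - log 2) - log x - x + 1 with h_def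
  have hderiv {x : ℝ} (hx : 0 < x) : HasDerivAt h (-(1 - x) ^ 2 / (x * (1 + x))) x := by
    have hlog := (((hasDerivAt_id x).const_add 1).log (by simp; positivity)).sub_const (log 2)
    refine ((((hlog.const_mul 4).sub (hasDerivAt_log hx.ne')).sub (hasDerivAt_id x)).add_const
      1).congr_deriv ?_
    simp only [id]
    field_simp
    ring
  have hanti : StrictAntiOn h (Icc u 1) :=
    strictAntiOn_of_hasDerivWithinAt_neg (convex_Icc u 1)
      (fun x hx => (hderiv (hu₀.trans_le hx.1)).continuousAt.continuousWithinAt)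
      (fun x hx => (hderiv (hu₀.trans_le (interior_subset hx).1)).hasDerivWithinAt)
      (fun x hx => by
        rw [interior_Icc] at hx
        have hx₀ := hu₀.trans hx.1
        have : 0 < (1 - x) ^ 2 := by nlinarith [hx.2]
        rw [neg_div]
        exact neg_neg_of_pos (by positivity))
  have := hanti (left_mem_Icc.2 hu₁.le) (right_mem_Icc.2 hu₁.le) hu₁
  norm_num [h_def] at this
  linarith

theorem rem_one_eq (Δ : ℝ) : rem 1 Δ = log (1 + 2 ^ (-Δ)) - log 2 + Δ * log 2 / 2 := by
  norm_num [rem]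
  ring

theorem log_two_rpow_neg (Δ : ℝ) : log ((2 : ℝ) ^ (-Δ)) = -(Δ * log 2) := by
  rw [log_rpow two_pos, neg_mul]

theorem two_mul_rem_one_lt_remDerivT_zero {Δ : ℝ} (hΔ : 0 < Δ) :
    2 * rem 1 Δ < remDerivT 0 Δ := by
  have := two_mul_log_one_add_lt (u := 2 ^ (-Δ)) (by positivity)
    (two_rpow_neg_lt_one hΔ)
  rw [rem_one_eq, remDerivT_zero_left]
  linarith

theorem remDerivT_zero_lt_four_mul_rem_one {Δ : ℝ} (hΔ : 0 < Δ) :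
    remDerivT 0 Δ < 4 * rem 1 Δ := by
  have := log_add_sub_one_lt_four_mul_log (u := 2 ^ (-Δ)) (by positivity)
    (two_rpow_neg_lt_one hΔ)
  rw [log_two_rpow_neg] at this
  rw [rem_one_eq, remDerivT_zero_left]
  linarith

theorem rStarP_eq (Δ : ℝ) :
    rStarP Δ = logb 2 (2 * rem 1 Δ / (remDerivT 0 Δ - 2 * rem 1 Δ)) := by
  have hX : (2 : ℝ) ^ Δ * 2 ^ (-Δ) = 1 := by rw [← rpow_add two_pos]; simp
  have hlogX : log ((2 : ℝ) ^ Δ) = Δ * log 2 := log_rpow two_pos Δ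
  have hlogX1 : log ((2 : ℝ) ^ Δ + 1) = Δ * log 2 + log (1 + 2 ^ (-Δ)) := by
    rw [← hlogX, ← log_mul (by positivity) (by positivity)]
    congr 1
    linear_combination -hX
  have hnum : -(2 : ℝ) ^ Δ * (2 * log ((2 : ℝ) ^ Δ + 1) - log ((2 : ℝ) ^ Δ) - 2 * log 2)
      = 2 ^ Δ * -(2 * rem 1 Δ) := by
    rw [rem_one_eq, hlogX1, hlogX]; ring
  have hden : 2 * (2 : ℝ) ^ Δ * (log ((2 : ℝ) ^ Δ + 1) - log ((2 : ℝ) ^ Δ) - log 2)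
      + (2 : ℝ) ^ Δ - 1 = 2 ^ Δ * -(remDerivT 0 Δ - 2 * rem 1 Δ) := by
    rw [rem_one_eq, remDerivT_zero_left, hlogX1, hlogX]; linear_combination hX
  rw [rStarP, hnum, hden, mul_div_mul_left _ _ (by positivity), neg_div_neg_eq]

theorem two_rpow_neg_rStarP {Δ : ℝ} (hΔ : 0 < Δ) :
    2 * rem 1 Δ * (2 : ℝ) ^ (-rStarP Δ) = remDerivT 0 Δ - 2 * rem 1 Δ := by
  have hN := rem_pos one_pos hΔ
  have hC := two_mul_rem_one_lt_remDerivT_zero hΔ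
  rw [rpow_neg two_pos.le, rStarP_eq Δ, rpow_logb two_pos one_lt_two.ne' (by
    exact div_pos (by positivity) (by linarith)), inv_div]
  field_simp

theorem rStarP_pos {Δ : ℝ} (hΔ : 0 < Δ) : 0 < rStarP Δ := by
  have hC := two_mul_rem_one_lt_remDerivT_zero hΔ
  have hC' := remDerivT_zero_lt_four_mul_rem_one hΔ
  rw [rStarP_eq Δ]
  exact logb_pos one_lt_two (by rw [one_lt_div (by linarith)]; linarith)

theorem remDerivS_one (x : ℝ) :
    remDerivS 1 x = log 2 * (1 - 2 ^ (-x)) / (2 * (1 + 2 ^ (-x))) := by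
  have : 0 < (2 : ℝ) ^ (-x) := by positivity
  simp only [remDerivS]
  field_simp
  ring

theorem hasDerivAt_remDerivT_zero (x : ℝ) :
    HasDerivAt (remDerivT 0) (log 2 * (1 - 2 ^ (-x))) x := by
  rw [show remDerivT 0 = fun x => 2 ^ (-x) + x * log 2 - 1 from funext remDerivT_zero_left]
  refine (((hasDerivAt_two_rpow_neg x).add ((hasDerivAt_id x).mul_const (log 2))).sub_const
    1).congr_deriv ?_
  ring

theorem QpSup_sub_QpMin_le {Δ s : ℝ} (hΔ : 0 < Δ) (hs : 0 ≤ s) :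
    QpSup Δ s - QpMin Δ s ≤ QpSup Δ (rStarP Δ) - QpMin Δ (rStarP Δ) := by
  set C := remDerivT 0 Δ
  set N := rem 1 Δ
  set w₀ := (2 : ℝ) ^ (-rStarP Δ)
  have hN : 0 < N := rem_pos one_pos hΔ
  -- `r*` is defined as the point where this relation holds, i.e. where `G'` changes sign.
  have hC : C = 2 * N * (1 + w₀) := by linear_combination -(two_rpow_neg_rStarP hΔ)
  have hr₀ := rStarP_pos hΔ
  set G : ℝ → ℝ := fun x => remDerivT 0 x / C - rem 1 x / N
  set D : ℝ → ℝ := fun x => log 2 * (1 - 2 ^ (-x)) / (C * (1 + 2 ^ (-x)))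
  have hG (x : ℝ) : QpSup Δ x - QpMin Δ x = G x := by rw [QpSup_eq_remDerivT, QpMin_eq_rem]
  have hderiv (x : ℝ) : HasDerivAt G (D x * (2 ^ (-x) - w₀)) x := by
    refine (((hasDerivAt_remDerivT_zero x).div_const C).sub
      ((hasDerivAt_rem_right one_pos x).div_const N)).congr_deriv ?_
    have : 0 < (2 : ℝ) ^ (-x) := by positivity
    have : 0 < w₀ := by positivity
    simp only [D, remDerivS_one, hC]
    field_simp
    ring
  have hD {x : ℝ} (hx : 0 ≤ x) : 0 ≤ D x := by
    have := log_pos one_lt_two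
    have := two_rpow_neg_le_one hx
    have : 0 < (2 : ℝ) ^ (-x) := by positivity
    exact div_nonneg (by nlinarith) (by rw [hC]; positivity)
  rw [hG, hG]
  rcases le_or_gt s (rStarP Δ) with hsr | hsr
  · refine monotoneOn_of_hasDerivWithinAt_nonneg (convex_Icc s (rStarP Δ))
      (fun x _ => (hderiv x).continuousAt.continuousWithinAt)
      (fun x _ => (hderiv x).hasDerivWithinAt) (fun x hx => ?_)
      (left_mem_Icc.2 hsr) (right_mem_Icc.2 hsr) hsr
    rw [interior_Icc] at hx
    exact mul_nonneg (hD (hs.trans hx.1.le))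
      (sub_nonneg.2 (two_rpow_neg_strictAnti.antitone hx.2.le))
  · refine antitoneOn_of_hasDerivWithinAt_nonpos (convex_Icc (rStarP Δ) s)
      (fun x _ => (hderiv x).continuousAt.continuousWithinAt)
      (fun x _ => (hderiv x).hasDerivWithinAt) (fun x hx => ?_)
      (left_mem_Icc.2 hsr.le) (right_mem_Icc.2 hsr.le) hsr.le
    rw [interior_Icc] at hx
    exact mul_nonpos_of_nonneg_of_nonpos (hD (hr₀.trans hx.1).le)
      (sub_nonpos.2 (two_rpow_neg_strictAnti.antitone hx.1.le))

theorem abs_Qp_sub_Qp_le {Δ ΔP i c r rhat : ℝ} (hΔPΔ : ΔP ≤ Δ) (hi : i ≤ 0) (hc : c ≤ 0)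
    (hrhat0 : 0 ≤ rhat) (hrhatr : rhat ≤ r) (hrΔ : r < Δ) (hround : r - rhat ≤ ΔP) :
    |Qp Δ i r - Qp Δ c rhat| ≤
      (QpSup Δ (rStarP Δ) - QpMin Δ (rStarP Δ)) + (1 - Qp Δ 0 (Δ - ΔP)) := by
  have hr0 : 0 ≤ r := hrhat0.trans hrhatr
  have hΔ : 0 < Δ := hr0.trans_lt hrΔ
  have hrhatΔ : rhat ≤ Δ := hrhatr.trans hrΔ.le
  have hI_nonneg : 0 ≤ 1 - Qp Δ 0 (Δ - ΔP) := by
    simpa using QpMin_sub_QpMin_le hΔ hΔPΔ hrhat0 le_rfl hrhatΔ (by linarith)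
  have hI := QpMin_sub_QpMin_le hΔ hΔPΔ hrhat0 hrhatr hrΔ.le hround
  have hR_r := QpSup_sub_QpMin_le hΔ hr0
  have hR_rhat := QpSup_sub_QpMin_le hΔ hrhat0
  have hMin_mono := QpMin_monotoneOn hΔ hrhat0 hr0 hrhatr
  have hSup_r := Qp_le_QpSup hΔ hi hr0 hrΔ.le
  have hSup_rhat := Qp_le_QpSup hΔ hc hrhat0 hrhatΔ
  have hMin_r := QpMin_le_Qp hi hr0 hrΔ.le
  have hMin_rhat := QpMin_le_Qp hc hrhat0 hrhatΔ
  rw [abs_le]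
  constructor <;> linarith

end LNS

theorem stmt_14_general (ε Δ ΔP : ℝ) (hΔPΔ : ΔP ≤ Δ)
    (i c r rhat : ℝ) (hi : i ≤ 0) (hc : c ≤ 0)
    (hrhat0 : 0 ≤ rhat) (hrhatr : rhat ≤ r) (hrΔ : r < Δ) (hround : r - rhat ≤ ΔP)
    (a b e p m q : ℝ)
    (ha : |a - Phip i| ≤ ε)
    (hb : |b - dPhip i| ≤ ε)
    (he : |e - Ep i Δ| ≤ ε)
    (hp : |p - Qp Δ c rhat| ≤ ε)
    (hp1 : |p| ≤ 1)
    (hm : |m - r * b| ≤ ε)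
    (hq : |q - e * p| ≤ ε) :
    |Phip (i - r) - (a - m + q)| ≤
      (4 + Δ) * ε +
        Ep 0 Δ * ((QpSup Δ (rStarP Δ) - QpMin Δ (rStarP Δ))
          + (1 - Qp Δ 0 (Δ - ΔP)) + ε) := by
  have hr0 : 0 ≤ r := hrhat0.trans hrhatr
  have hΔ : 0 < Δ := hr0.trans_lt hrΔ
  have hrem : |Ep i r - q| ≤ Ep 0 Δ * ((QpSup Δ (rStarP Δ) - QpMin Δ (rStarP Δ))
      + (1 - Qp Δ 0 (Δ - ΔP)) + ε) + 2 * ε := by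
    have hEp : Ep i r = Ep i Δ * Qp Δ i r := (mul_div_cancel₀ _ (LNS.Ep_pos i hΔ).ne').symm
    rw [hEp]
    exact abs_mul_sub_le_of_approx (LNS.Ep_pos i hΔ).le (LNS.Ep_le_Ep_zero hi hΔ.le)
      (LNS.abs_Qp_sub_Qp_le hΔPΔ hi hc hrhat0 hrhatr hrΔ hround) he hp hp1 hq
  have hdPhip : |r * (b - dPhip i)| ≤ Δ * ε := by
    rw [abs_mul, abs_of_nonneg hr0]; exact mul_le_mul hrΔ.le hb (abs_nonneg _) hΔ.le
  calc |Phip (i - r) - (a - m + q)|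
      = |-(a - Phip i) + (m - r * b) + r * (b - dPhip i) + (Ep i r - q)| := by
        congr 1; rw [Ep]; ring
    _ ≤ |a - Phip i| + |m - r * b| + |r * (b - dPhip i)| + |Ep i r - q| := by
        refine (abs_add_le _ _).trans (add_le_add_left ?_ _)
        simpa only [abs_neg] using abs_add_three (-(a - Phip i)) (m - r * b) (r * (b - dPhip i))
    _ ≤ _ := by linarith

theorem stmt_14 (ε Δ ΔP : ℝ) (hε : 0 ≤ ε) (hΔ : 0 < Δ) (hΔP : 0 < ΔP) (hΔPΔ : ΔP ≤ Δ)
    (i c r rhat : ℝ) (hi : i ≤ 0) (hc : c ≤ 0)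
    (hrhat0 : 0 ≤ rhat) (hrhatr : rhat ≤ r) (hrΔ : r < Δ) (hround : r - rhat ≤ ΔP)
    (a b e p m q : ℝ)
    (ha : |a - Phip i| ≤ ε)
    (hb : |b - dPhip i| ≤ ε)
    (he : |e - Ep i Δ| ≤ ε)
    (hp : |p - Qp Δ c rhat| ≤ ε)
    (hp1 : |p| ≤ 1)
    (hm : |m - r * b| ≤ ε)
    (hq : |q - e * p| ≤ ε) :
    |Phip (i - r) - (a - m + q)| ≤
      (4 + Δ) * ε +
        Ep 0 Δ * ((QpSup Δ (rStarP Δ) - QpMin Δ (rStarP Δ))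
          + (1 - Qp Δ 0 (Δ - ΔP)) + ε) :=
  stmt_14_general ε Δ ΔP hΔPΔ i c r rhat hi hc hrhat0 hrhatr hrΔ hround a b e p m q ha hb he hp hp1
    hm hq
end
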